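/- Define t : ℝ → ℝ by t(s) = −(1+s²)²·(1−6s²+s⁴)³ / (32·s²·(1+s⁴)³). Then: (i) t maps the open interval (1, 1+√2) bijectively onto (0,1); (ii) lim_{s→(1+√2)⁻} t(s)/( (√2+1−s)³ ) = (32/27)·(10−7√2); (iii) lim_{s→1⁺} (1−t(s))/(s−1)² = 8. -/

import Mathlib

/-!
The derivative of `t` is `-(s⁴-1)(1-6s²+s⁴)²(1+6s²+s⁴)² / (16 s³(1+s⁴)⁴)`, negative on
`(1, 1+√2)` because `1-6s²+s⁴ = ((s-1)²-2)(s²+2s-1)` has no zero there. So `t` decreases strictly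
from `t(1) = 1` to `t(1+√2) = 0` and, by the intermediate value theorem, maps the open interval
bijectively onto `(0,1)`. Both asymptotics come from exact factorizations:
`(s-1)²-2 = -(√2+1-s)(s-1+√2)` exhibits the triple zero of `t` at `1+√2`, and
`1 - t(s) = (s²-1)²(1+6s²+s⁴)³ / (32 s²(1+s⁴)³)` the double zero of `1 - t` at `1`.
-/

open Real Filter Set Topology

theorem StrictAntiOn.bijOn_Ioo_of_continuousOn {α δ : Type*} [ConditionallyCompleteLinearOrder α]
    [TopologicalSpace α] [OrderTopology α] [DenselyOrdered α] [LinearOrder δ] [TopologicalSpace δ]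
    [OrderClosedTopology δ] {f : α → δ} {a b : α} (hab : a ≤ b)
    (hf : ContinuousOn f (Icc a b)) (hanti : StrictAntiOn f (Icc a b)) :
    BijOn f (Ioo a b) (Ioo (f b) (f a)) := by
  refine ⟨fun x hx => ⟨?_, ?_⟩, hanti.injOn.mono Ioo_subset_Icc_self,
    intermediate_value_Ioo' hab hf⟩
  · exact hanti (Ioo_subset_Icc_self hx) (right_mem_Icc.2 hab) hx.2
  · exact hanti (left_mem_Icc.2 hab) (Ioo_subset_Icc_self hx) hx.1

theorem tendsto_div_of_eventuallyEq_mul {α 𝕜 : Type*} [Field 𝕜] [TopologicalSpace 𝕜]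
    {f g h : α → 𝕜} {l : Filter α} {c : 𝕜} (hg : Tendsto g l (𝓝 c))
    (hfg : ∀ᶠ x in l, f x = h x * g x) (hh : ∀ᶠ x in l, h x ≠ 0) :
    Tendsto (fun x => f x / h x) l (𝓝 c) :=
  hg.congr' <| by
    filter_upwards [hfg, hh] with x hfx hhx
    rw [hfx, mul_div_cancel_left₀ _ hhx]

noncomputable def tParam (s : ℝ) : ℝ :=
  -((1 + s ^ 2) ^ 2 * (1 - 6 * s ^ 2 + s ^ 4) ^ 3) / (32 * s ^ 2 * (1 + s ^ 4) ^ 3)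

theorem quartic_eq_mul (s : ℝ) :
    1 - 6 * s ^ 2 + s ^ 4 = (s ^ 2 - 2 * s - 1) * (s ^ 2 + 2 * s - 1) := by
  ring

theorem tParam_one : tParam 1 = 1 := by
  norm_num [tParam]

theorem tParam_one_add_sqrt_two : tParam (1 + √2) = 0 := by
  have hs : (1 + √2) ^ 2 - 2 * (1 + √2) - 1 = 0 := by
    linear_combination sq_sqrt zero_le_two
  simp [tParam, quartic_eq_mul, hs]

theorem continuousOn_tParam : ContinuousOn tParam {0}ᶜ :=
  ContinuousOn.div (by fun_prop) (by fun_prop) fun x (hx : x ≠ 0) => by positivity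

theorem hasDerivAt_tParam {x : ℝ} (hx : x ≠ 0) :
    HasDerivAt tParam (-((x ^ 4 - 1) * (1 - 6 * x ^ 2 + x ^ 4) ^ 2 * (1 + 6 * x ^ 2 + x ^ 4) ^ 2 /
      (16 * x ^ 3 * (1 + x ^ 4) ^ 4))) x := by
  have hnum := ((((hasDerivAt_pow 2 x).const_add 1).pow 2).mul
    (((((hasDerivAt_pow 2 x).const_mul (6 : ℝ)).const_sub 1).add (hasDerivAt_pow 4 x)).pow 3)).neg
  have hden := ((hasDerivAt_pow 2 x).const_mul (32 : ℝ)).mul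
    (((hasDerivAt_pow 4 x).const_add 1).pow 3)
  have hden_ne : 32 * x ^ 2 * (1 + x ^ 4) ^ 3 ≠ 0 := by positivity
  refine (hnum.div hden hden_ne).congr_deriv ?_
  simp only [Pi.add_apply, Pi.pow_apply, Pi.mul_apply, Pi.neg_apply]
  field_simp
  ring

theorem quartic_neg_of_mem_Ioo {x : ℝ} (hx : x ∈ Ioo 1 (1 + √2)) :
    1 - 6 * x ^ 2 + x ^ 4 < 0 := by
  have hsq : (x - 1) ^ 2 < 2 := by
    have := pow_lt_pow_left₀ (by linarith [hx.2] : x - 1 < √2) (by linarith [hx.1]) two_ne_zero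
    rwa [sq_sqrt zero_le_two] at this
  have hneg : x ^ 2 - 2 * x - 1 < 0 := by linarith
  have hpos : 0 < x ^ 2 + 2 * x - 1 := by nlinarith [hx.1]
  linarith [quartic_eq_mul x, mul_neg_of_neg_of_pos hneg hpos]

theorem strictAntiOn_tParam : StrictAntiOn tParam (Icc 1 (1 + √2)) := by
  have hIcc : Icc 1 (1 + √2) ⊆ {0}ᶜ := fun x hx => (zero_lt_one.trans_le hx.1).ne'
  refine strictAntiOn_of_deriv_neg (convex_Icc _ _) (continuousOn_tParam.mono hIcc) fun x hx => ?_
  rw [interior_Icc] at hx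
  have hx0 : 0 < x := zero_lt_one.trans hx.1
  rw [(hasDerivAt_tParam hx0.ne').deriv, neg_lt_zero]
  have hquartic : 0 < (1 - 6 * x ^ 2 + x ^ 4) ^ 2 := sq_pos_of_neg (quartic_neg_of_mem_Ioo hx)
  have hx4 : 0 < x ^ 4 - 1 := sub_pos.2 (one_lt_pow₀ hx.1 (by norm_num))
  positivity

theorem bijOn_tParam : BijOn tParam (Ioo 1 (1 + √2)) (Ioo 0 1) := by
  have h := strictAntiOn_tParam.bijOn_Ioo_of_continuousOn (le_add_of_nonneg_right (sqrt_nonneg 2))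
    (continuousOn_tParam.mono fun x hx => (zero_lt_one.trans_le hx.1).ne')
  rwa [tParam_one, tParam_one_add_sqrt_two] at h

theorem tParam_eq_cube_mul (s : ℝ) :
    tParam s = (√2 + 1 - s) ^ 3 *
      ((1 + s ^ 2) ^ 2 * ((s - 1 + √2) * (s ^ 2 + 2 * s - 1)) ^ 3 /
        (32 * s ^ 2 * (1 + s ^ 4) ^ 3)) := by
  have hfac : s ^ 2 - 2 * s - 1 = -((√2 + 1 - s) * (s - 1 + √2)) := by
    linear_combination sq_sqrt zero_le_two
  rw [tParam, mul_div_assoc', quartic_eq_mul, hfac]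
  ring

theorem tParam_cofactor_one_add_sqrt_two :
    (1 + (1 + √2) ^ 2) ^ 2 * ((1 + √2 - 1 + √2) * ((1 + √2) ^ 2 + 2 * (1 + √2) - 1)) ^ 3 /
      (32 * (1 + √2) ^ 2 * (1 + (1 + √2) ^ 4) ^ 3) = 32 / 27 * (10 - 7 * √2) := by
  set s := 1 + √2 with hs_def
  have hsqrt : √2 = s - 1 := by linarith
  have hs : s ^ 2 = 2 * s + 1 := by
    rw [hs_def]
    linear_combination sq_sqrt zero_le_two
  have h1 : 1 + s ^ 2 = 2 * (s + 1) := by linear_combination hs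
  have h2 : s ^ 2 + 2 * s - 1 = 4 * s := by linear_combination hs
  have h3 : 1 + s ^ 4 = 6 * s ^ 2 := by linear_combination (s ^ 2 + 2 * s - 1) * hs
  rw [hsqrt, h1, h2, h3, div_eq_iff (by positivity)]
  linear_combination 2048 * s ^ 3 * (28 * s ^ 4 - 11 * s ^ 3 + 5 * s ^ 2 - 3 * s + 1) * hs

theorem one_sub_tParam {s : ℝ} (hs : s ≠ 0) :
    1 - tParam s = (s - 1) ^ 2 *
      ((s + 1) ^ 2 * (1 + 6 * s ^ 2 + s ^ 4) ^ 3 / (32 * s ^ 2 * (1 + s ^ 4) ^ 3)) := by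
  rw [tParam]
  field_simp
  ring

theorem tendsto_tParam_div_cube :
    Tendsto (fun s => tParam s / (√2 + 1 - s) ^ 3) (𝓝[<] (1 + √2))
      (𝓝 (32 / 27 * (10 - 7 * √2))) := by
  refine tendsto_div_of_eventuallyEq_mul ?_ (Eventually.of_forall tParam_eq_cube_mul) ?_
  · rw [← tParam_cofactor_one_add_sqrt_two]
    exact (ContinuousAt.div (by fun_prop) (by fun_prop) (by positivity)).tendsto.mono_left
      nhdsWithin_le_nhds
  · filter_upwards [self_mem_nhdsWithin] with s (hs : s < 1 + √2)
    exact pow_ne_zero 3 (by linarith)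

theorem tendsto_one_sub_tParam_div_sq :
    Tendsto (fun s => (1 - tParam s) / (s - 1) ^ 2) (𝓝[>] 1) (𝓝 8) := by
  have hcofactor : Tendsto
      (fun s : ℝ => (s + 1) ^ 2 * (1 + 6 * s ^ 2 + s ^ 4) ^ 3 / (32 * s ^ 2 * (1 + s ^ 4) ^ 3))
      (𝓝 1) (𝓝 8) := by
    have h := (ContinuousAt.div (by fun_prop) (by fun_prop) (by norm_num) :
      ContinuousAt (fun s : ℝ => (s + 1) ^ 2 * (1 + 6 * s ^ 2 + s ^ 4) ^ 3 /
        (32 * s ^ 2 * (1 + s ^ 4) ^ 3)) 1).tendsto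
    norm_num at h
    exact h
  refine tendsto_div_of_eventuallyEq_mul (hcofactor.mono_left nhdsWithin_le_nhds) ?_ ?_ <;>
    filter_upwards [self_mem_nhdsWithin] with s (hs : 1 < s)
  · exact one_sub_tParam (by positivity)
  · exact pow_ne_zero 2 (sub_ne_zero.2 hs.ne')

theorem algebraic_solution_parameterization (t : ℝ → ℝ)
    (ht : ∀ s : ℝ, t s =
      -((1 + s ^ 2) ^ 2 * (1 - 6 * s ^ 2 + s ^ 4) ^ 3) / (32 * s ^ 2 * (1 + s ^ 4) ^ 3)) :
    Set.BijOn t (Set.Ioo 1 (1 + Real.sqrt 2)) (Set.Ioo 0 1) ∧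
    Tendsto (fun s : ℝ => t s / (Real.sqrt 2 + 1 - s) ^ 3)
      (nhdsWithin (1 + Real.sqrt 2) (Set.Iio (1 + Real.sqrt 2)))
      (nhds ((32 / 27) * (10 - 7 * Real.sqrt 2))) ∧
    Tendsto (fun s : ℝ => (1 - t s) / (s - 1) ^ 2)
      (nhdsWithin 1 (Set.Ioi 1)) (nhds 8) := by
  obtain rfl : t = tParam := funext ht
  exact ⟨bijOn_tParam, tendsto_tParam_div_cube, tendsto_one_sub_tParam_div_sq⟩
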